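/- arXiv:1708.06280 — 2 statements merged into one kernel-verified Lean document; each statement's English description precedes it below -/
import Mathlib

section
/- For every matrix A ∈ GL_n(ℂ) there exists an invertible diagonal matrix D ∈ GL_n(ℂ) such that A * D has n distinct eigenvalues. -/
/-!
Choose `d` with nonzero entries maximising the number of distinct roots of
`P = (A * diagonal d).charpoly`, and suppose `P` has a root `l` of multiplicity `m ≥ 2`; then
`l ≠ 0` because `A * diagonal d` is invertible. Moving the entry `d j` to `d j + s` changes `P`
into `P - s β_j`. Unless `(X - l) ^ m ∣ β_j`, a generic member of this pencil is
`gcd P β_j` times a separable factor coprime to the gcd, and so has more distinct roots than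
`P`, contradicting maximality. Hence `(X - l) ^ m` divides `∑ j, d j β_j`, which is
`X P' - n P` by homogeneity of `det (X - A * diagonal d)` in `(X, d)`; but `X P' - n P`
vanishes only to order `m - 1` at `l ≠ 0`.
-/

open Polynomial

theorem Multiset.card_toFinset_add_lt {α : Type*} [DecidableEq α] {M N : Multiset α} {a : α}
    (haN : a ∈ N) (ha : 2 ≤ (M + N).count a) :
    (M + N).toFinset.card < M.toFinset.card + card N := by
  rw [Multiset.toFinset_add]
  by_cases haM : a ∈ M
  · have hinter : (M.toFinset ∩ N.toFinset).Nonempty := ⟨a, by simpa using ⟨haM, haN⟩⟩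
    have := Finset.card_union_add_card_inter M.toFinset N.toFinset
    have := N.toFinset_card_le
    have := hinter.card_pos
    omega
  · have hN : ¬ N.Nodup := by
      rw [Multiset.nodup_iff_count_le_one, not_forall]
      refine ⟨a, ?_⟩
      rw [Multiset.count_add, Multiset.count_eq_zero.mpr haM] at ha
      omega
    have := Finset.card_union_le M.toFinset N.toFinset
    have := lt_of_le_of_ne N.toFinset_card_le (mt Multiset.toFinset_card_eq_card_iff_nodup.mp hN)
    omega

namespace Polynomial

section CharZero

variable {K : Type*} [Field K] [CharZero K]

theorem _root_.IsCoprime.eq_div_of_isRoot_sub_C_mul {f q : K[X]} (hfq : IsCoprime f q) {s x : K}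
    (hx : (f - C s * q).IsRoot x) : s = f.eval x / q.eval x := by
  have hfx : f.eval x = s * q.eval x := by simpa [sub_eq_zero] using hx
  have hqx : q.eval x ≠ 0 := fun hqx ↦ by
    obtain ⟨a, b, hab⟩ := hfq
    simpa [hfx, hqx] using congrArg (eval x) hab
  rw [hfx, mul_div_cancel_right₀ _ hqx]

theorem _root_.IsCoprime.finite_setOf_not_nodup_roots_sub_C_mul {f q : K[X]} (hfq : IsCoprime f q)
    (hf : 0 < f.natDegree) : {s : K | ¬ (f - C s * q).roots.Nodup}.Finite := by
  classical
  have hW : wronskian f q ≠ 0 := fun h ↦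
    hf.ne' (derivative_eq_zero.mp ((hfq.wronskian_eq_zero_iff.mp h).1))
  refine ((wronskian f q).roots.toFinset.finite_toSet.image fun x ↦ f.eval x / q.eval x).subset ?_
  intro s hs
  obtain ⟨x, hx⟩ : ∃ x, 1 < (f - C s * q).roots.count x := by
    simpa [Multiset.nodup_iff_count_le_one] using hs
  have hp : f - C s * q ≠ 0 := fun h ↦ by simp [h] at hx
  rw [count_roots, one_lt_rootMultiplicity_iff_isRoot hp] at hx
  obtain ⟨hx, hx'⟩ := hx
  have hfx : f.eval x = s * q.eval x := by simpa [sub_eq_zero] using hx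
  have hfx' : (derivative f).eval x = s * (derivative q).eval x := by
    simpa [sub_eq_zero] using hx'
  refine ⟨x, ?_, (hfq.eq_div_of_isRoot_sub_C_mul hx).symm⟩
  rw [Finset.mem_coe, Multiset.mem_toFinset, mem_roots hW, IsRoot.def, wronskian, eval_sub,
    eval_mul, eval_mul, hfx, hfx']
  ring

theorem _root_.IsCoprime.finite_setOf_isRoot_sub_C_mul {f q g : K[X]} (hfq : IsCoprime f q)
    (hg : g ≠ 0) :
    {s : K | ∃ x, g.IsRoot x ∧ (f - C s * q).IsRoot x}.Finite := by
  classical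
  refine (g.roots.toFinset.finite_toSet.image fun x ↦ f.eval x / q.eval x).subset ?_
  rintro s ⟨x, hgx, hx⟩
  exact ⟨x, by simpa [mem_roots hg] using hgx, (hfq.eq_div_of_isRoot_sub_C_mul hx).symm⟩

end CharZero

section IsAlgClosed

variable {K : Type*} [Field K] [IsAlgClosed K] [DecidableEq K]

theorem card_roots_toFinset_mul {g h : K[X]} (hg : g ≠ 0) (hh : h ≠ 0) (hnd : h.roots.Nodup)
    (hdisj : ∀ x, g.IsRoot x → ¬ h.IsRoot x) :
    (g * h).roots.toFinset.card = g.roots.toFinset.card + h.natDegree := by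
  have hdisj' : Disjoint g.roots.toFinset h.roots.toFinset := by
    simpa [Finset.disjoint_left, mem_roots hg, mem_roots hh] using hdisj
  rw [roots_mul (mul_ne_zero hg hh), Multiset.toFinset_add, Finset.card_union_of_disjoint hdisj',
    Multiset.toFinset_card_of_nodup hnd, IsAlgClosed.card_roots_eq_natDegree]

variable [CharZero K]

theorem finite_setOf_card_roots_toFinset_sub_C_mul_le {f q : K[X]} {l : K} (hq : q ≠ 0)
    (hdeg : q.natDegree < f.natDegree) (hl : 2 ≤ f.rootMultiplicity l)
    (hlq : q.rootMultiplicity l < f.rootMultiplicity l) :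
    {s : K | (f - C s * q).roots.toFinset.card ≤ f.roots.toFinset.card}.Finite := by
  obtain ⟨g, f₁, q₁, rfl, rfl, hcop⟩ : ∃ g f₁ q₁, f = g * f₁ ∧ q = g * q₁ ∧ IsCoprime f₁ q₁ :=
    ⟨gcd f q, f / gcd f q, q / gcd f q,
      (EuclideanDomain.mul_div_cancel' (gcd_ne_zero_of_right hq) (gcd_dvd_left f q)).symm,
      (EuclideanDomain.mul_div_cancel' (gcd_ne_zero_of_right hq) (gcd_dvd_right f q)).symm,
      isCoprime_div_gcd_div_gcd hq⟩
  have hf : g * f₁ ≠ 0 := fun h ↦ by simp [h] at hdeg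
  have hg : g ≠ 0 := left_ne_zero_of_mul hq
  have hf₁ : f₁ ≠ 0 := right_ne_zero_of_mul hf
  have hq₁ : q₁ ≠ 0 := right_ne_zero_of_mul hq
  have hdeg₁ : q₁.natDegree < f₁.natDegree := by
    rw [natDegree_mul hg hq₁, natDegree_mul hg hf₁] at hdeg
    omega
  have hcard : (g * f₁).roots.toFinset.card < g.roots.toFinset.card + f₁.natDegree := by
    rw [← IsAlgClosed.card_roots_eq_natDegree (p := f₁), roots_mul hf]
    refine Multiset.card_toFinset_add_lt (a := l) ?_ (by rwa [← roots_mul hf, count_roots])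
    rw [rootMultiplicity_mul hq, rootMultiplicity_mul hf] at hlq
    rw [← Multiset.count_pos, count_roots]
    omega
  refine ((hcop.finite_setOf_not_nodup_roots_sub_C_mul (by omega)).union
    (hcop.finite_setOf_isRoot_sub_C_mul hg)).subset fun s hs ↦ ?_
  by_contra hgood
  simp only [Set.mem_union, Set.mem_ofPred_eq, not_or, not_not, not_exists, not_and] at hgood
  have hdeg_s : (f₁ - C s * q₁).natDegree = f₁.natDegree :=
    natDegree_sub_eq_left_of_natDegree_lt (natDegree_C_mul_le s q₁ |>.trans_lt hdeg₁)
  have hs₁ : f₁ - C s * q₁ ≠ 0 := fun h ↦ by simp [h] at hdeg_s; omega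
  rw [Set.mem_ofPred_eq, show g * f₁ - C s * (g * q₁) = g * (f₁ - C s * q₁) by ring,
    card_roots_toFinset_mul hg hs₁ hgood.1 hgood.2, hdeg_s] at hs
  omega

end IsAlgClosed

section IsDomain

variable {R : Type*} [CommRing R] [IsDomain R] [CharZero R]

theorem not_pow_rootMultiplicity_dvd_X_mul_derivative_sub {p : R[X]} {l : R} (hp : p ≠ 0)
    (hl : l ≠ 0) (hroot : p.IsRoot l) (c : R) :
    ¬ (X - C l) ^ p.rootMultiplicity l ∣ X * derivative p - C c * p := by
  intro h
  have hXp : (X - C l) ^ p.rootMultiplicity l ∣ X * derivative p := by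
    simpa using dvd_add h ((pow_rootMultiplicity_dvd p l).mul_left (C c))
  have hp' : derivative p ≠ 0 := fun h' ↦
    (natDegree_pos_iff_degree_pos.mpr (degree_pos_of_root hp hroot)).ne' (derivative_eq_zero.mp h')
  have hle := (le_rootMultiplicity_iff (mul_ne_zero X_ne_zero hp')).mpr hXp
  rw [rootMultiplicity_mul (mul_ne_zero X_ne_zero hp'), derivative_rootMultiplicity_of_root hroot,
    rootMultiplicity_eq_zero (p := X) (by simpa using hl)] at hle
  have hpos := (rootMultiplicity_pos hp).mpr hroot
  omega

end IsDomain

end Polynomial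

namespace Matrix

section CommRing

variable {ι R : Type*} [Fintype ι] [DecidableEq ι] [CommRing R]

theorem derivative_det (M : Matrix ι ι R[X]) :
    derivative M.det = ∑ j, (M.updateCol j fun i ↦ derivative (M i j)).det := by
  simp only [det_apply, map_sum, Units.smul_def, map_zsmul, derivative_prod_finset,
    Finset.smul_sum]
  rw [Finset.sum_comm]
  refine Finset.sum_congr rfl fun j _ ↦ Finset.sum_congr rfl fun σ _ ↦ ?_
  rw [← Finset.mul_prod_erase Finset.univ _ (Finset.mem_univ j), mul_comm]
  congr 2
  · simp
  · exact Finset.prod_congr rfl fun i hi ↦ by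
      rw [updateCol_apply, if_neg (Finset.ne_of_mem_erase hi)]

/-- Minus the slope of `(A * diagonal d).charpoly`, which is affine in `d j`
(`charpoly_mul_diagonal_update_add`). -/
noncomputable def charpolySlope (A : Matrix ι ι R) (d : ι → R) (j : ι) : R[X] :=
  ((charmatrix (A * diagonal d)).updateCol j fun i ↦ C (A i j)).det

theorem charpoly_mul_diagonal_update (A : Matrix ι ι R) (d : ι → R) (j : ι) (y : R) :
    (A * diagonal (Function.update d j y)).charpoly =
      X * ((charmatrix (A * diagonal d)).updateCol j (Pi.single j 1)).det -
        C y * charpolySlope A d j := by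
  have hcol : charmatrix (A * diagonal (Function.update d j y)) =
      (charmatrix (A * diagonal d)).updateCol j
        ((X : R[X]) • Pi.single j 1 + (-C y) • fun i ↦ C (A i j)) := by
    refine Matrix.ext fun i k ↦ ?_
    rcases eq_or_ne k j with rfl | hk
    · by_cases hik : i = k <;> simp [hik, mul_comm, sub_eq_add_neg]
    · simp [charmatrix_apply, hk]
  rw [charpoly, hcol, det_updateCol_add, det_updateCol_smul, det_updateCol_smul, charpolySlope]
  ring

theorem charpoly_mul_diagonal_update_add (A : Matrix ι ι R) (d : ι → R) (j : ι) (s : R) :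
    (A * diagonal (Function.update d j (d j + s))).charpoly =
      (A * diagonal d).charpoly - C s * charpolySlope A d j := by
  have h := charpoly_mul_diagonal_update A d j (d j)
  rw [Function.update_eq_self] at h
  rw [charpoly_mul_diagonal_update, h, map_add]
  ring

theorem degree_charpolySlope_lt [Nontrivial R] (A : Matrix ι ι R) (d : ι → R) (j : ι) :
    (charpolySlope A d j).degree < (A * diagonal d).charpoly.degree := by
  have h := charpoly_mul_diagonal_update_add A d j 1
  rw [map_one, one_mul, eq_sub_iff_add_eq, ← eq_sub_iff_add_eq'] at h
  rw [h]
  exact degree_sub_lt_left (by rw [charpoly_degree_eq_dim, charpoly_degree_eq_dim])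
    (charpoly_monic _).ne_zero
    (by rw [(charpoly_monic _).leadingCoeff, (charpoly_monic _).leadingCoeff])

theorem sum_C_mul_charpolySlope (A : Matrix ι ι R) (d : ι → R) :
    ∑ j, C (d j) * charpolySlope A d j =
      X * derivative (A * diagonal d).charpoly -
        C (Fintype.card ι : R) * (A * diagonal d).charpoly := by
  have hder : derivative (A * diagonal d).charpoly =
      ∑ j, ((charmatrix (A * diagonal d)).updateCol j (Pi.single j 1)).det := by
    rw [charpoly, derivative_det]
    congr! with j - i
    by_cases hij : i = j <;> simp [hij]
  have hP (j : ι) := charpoly_mul_diagonal_update A d j (d j)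
  simp only [Function.update_eq_self] at hP
  rw [hder, Finset.mul_sum, map_natCast, ← nsmul_eq_mul, ← Finset.card_univ, ← Finset.sum_const,
    ← Finset.sum_sub_distrib]
  exact Finset.sum_congr rfl fun j _ ↦ by rw [hP j]; ring

end CommRing

section IsAlgClosed

variable {ι K : Type*} [Fintype ι] [DecidableEq ι] [Field K] [IsAlgClosed K] [CharZero K]
  [DecidableEq K]

theorem pow_rootMultiplicity_dvd_charpolySlope_of_isMaxOn {A : Matrix ι ι K} {d : ι → K}
    (hmax : IsMaxOn (fun d ↦ (A * diagonal d).charpoly.roots.toFinset.card) {d | ∀ i, d i ≠ 0} d)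
    (hd : ∀ i, d i ≠ 0) {l : K} (hl : 2 ≤ (A * diagonal d).charpoly.rootMultiplicity l) (j : ι) :
    (X - C l) ^ (A * diagonal d).charpoly.rootMultiplicity l ∣ charpolySlope A d j := by
  by_contra hdvd
  have hq : charpolySlope A d j ≠ 0 := fun h ↦ hdvd (h ▸ dvd_zero _)
  have hlt : (charpolySlope A d j).rootMultiplicity l <
      (A * diagonal d).charpoly.rootMultiplicity l := by
    rwa [← not_le, le_rootMultiplicity_iff hq]
  have hdeg := natDegree_lt_natDegree hq (degree_charpolySlope_lt A d j)
  obtain ⟨s, hs⟩ := ((finite_setOf_card_roots_toFinset_sub_C_mul_le hq hdeg hl hlt).union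
    (Set.finite_singleton (-d j))).infinite_compl.nonempty
  simp only [Set.mem_compl_iff, Set.mem_union, Set.mem_ofPred_eq, Set.mem_singleton_iff,
    not_or, not_le] at hs
  refine hs.1.not_ge ?_
  rw [← charpoly_mul_diagonal_update_add]
  refine hmax fun i ↦ ?_
  rcases eq_or_ne i j with rfl | hij
  · simpa using fun h ↦ hs.2 (eq_neg_of_add_eq_zero_right h)
  · simpa [hij] using hd i

theorem nodup_roots_charpoly_mul_diagonal_of_isMaxOn {A : Matrix ι ι K} (hA : IsUnit A)
    {d : ι → K}
    (hmax : IsMaxOn (fun d ↦ (A * diagonal d).charpoly.roots.toFinset.card) {d | ∀ i, d i ≠ 0} d)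
    (hd : ∀ i, d i ≠ 0) :
    (A * diagonal d).charpoly.roots.Nodup := by
  have hP : (A * diagonal d).charpoly ≠ 0 := (charpoly_monic _).ne_zero
  by_contra hnd
  obtain ⟨l, hl⟩ : ∃ l, 1 < (A * diagonal d).charpoly.rootMultiplicity l := by
    simpa [Multiset.nodup_iff_count_le_one, count_roots] using hnd
  have hroot : (A * diagonal d).charpoly.IsRoot l := (rootMultiplicity_pos hP).mp (by omega)
  have hl0 : l ≠ 0 := by
    rintro rfl
    refine (spectrum.zero_mem_iff K).mp (mem_spectrum_iff_isRoot_charpoly.mpr hroot) ?_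
    exact hA.mul (isUnit_diagonal.mpr (Pi.isUnit_iff.mpr fun i ↦ (hd i).isUnit))
  refine not_pow_rootMultiplicity_dvd_X_mul_derivative_sub hP hl0 hroot (Fintype.card ι) ?_
  rw [← sum_C_mul_charpolySlope]
  exact Finset.dvd_sum fun j _ ↦
    (pow_rootMultiplicity_dvd_charpolySlope_of_isMaxOn hmax hd hl j).mul_left _

theorem exists_nodup_roots_charpoly_mul_diagonal {A : Matrix ι ι K} (hA : IsUnit A) :
    ∃ d : ι → K, (∀ i, d i ≠ 0) ∧ (A * diagonal d).charpoly.roots.Nodup := by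
  set r := fun d : ι → K ↦ (A * diagonal d).charpoly.roots.toFinset.card
  have hbdd : BddAbove (r '' {d | ∀ i, d i ≠ 0}) := by
    refine ⟨Fintype.card ι, Set.forall_mem_image.mpr fun d _ ↦ ?_⟩
    calc r d ≤ (A * diagonal d).charpoly.roots.card := Multiset.toFinset_card_le _
      _ ≤ (A * diagonal d).charpoly.natDegree := card_roots' _
      _ = Fintype.card ι := charpoly_natDegree_eq_dim _
  obtain ⟨_, ⟨d, hd, rfl⟩, hmax⟩ := hbdd.exists_isGreatest_of_nonempty
    ⟨_, (fun _ ↦ 1 : ι → K), fun _ ↦ one_ne_zero, rfl⟩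
  exact ⟨d, hd, nodup_roots_charpoly_mul_diagonal_of_isMaxOn hA
    (fun d' hd' ↦ hmax ⟨d', hd', rfl⟩) hd⟩

end IsAlgClosed

end Matrix

theorem exists_diag_mul_distinct_eigenvalues (n : ℕ) (A : GL (Fin n) ℂ) :
    ∃ D : Matrix (Fin n) (Fin n) ℂ, D.IsDiag ∧ IsUnit D ∧
      (Matrix.charpoly ((A : Matrix (Fin n) (Fin n) ℂ) * D)).roots.toFinset.card = n := by
  obtain ⟨d, hd, hnd⟩ := Matrix.exists_nodup_roots_charpoly_mul_diagonal A.isUnit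
  refine ⟨Matrix.diagonal d, Matrix.isDiag_diagonal d,
    Matrix.isUnit_diagonal.mpr (Pi.isUnit_iff.mpr fun i ↦ (hd i).isUnit), ?_⟩
  rw [Multiset.toFinset_card_of_nodup hnd, IsAlgClosed.card_roots_eq_natDegree,
    Matrix.charpoly_natDegree_eq_dim, Fintype.card_fin]
end

section
/- Let ψ be an automorphism of an algebraically closed field F of characteristic zero inducing an automorphism φ of GL_n(F) with finitely many twisted conjugacy classes. Then the subgroup generated by the twisted conjugacy class [I_n]_φ of the identity matrix is all of GL_n(F). -/
open Matrix

section TwistedAux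

variable {F : Type*} [Field F] {n : ℕ}

lemma twisted_map_transvection (ψ : F ≃+* F) (i j : Fin n) (c : F) :
    (Matrix.transvection i j c).map (ψ : F → F) = Matrix.transvection i j (ψ c) := by
  ext a b
  simp only [Matrix.map_apply, Matrix.transvection, Matrix.add_apply, Matrix.one_apply,
    Matrix.single, Matrix.of_apply, map_add, apply_ite (ψ : F → F), _root_.map_one,
    map_zero]

def twistedDiagUnit (d : Fin n → F) (hd : ∀ k, d k ≠ 0) : GL (Fin n) F where
  val := Matrix.diagonal d
  inv := Matrix.diagonal fun k => (d k)⁻¹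
  val_inv := by
    rw [Matrix.diagonal_mul_diagonal]
    ext a b
    simp [Matrix.diagonal_apply, Matrix.one_apply, mul_inv_cancel₀ (hd _)]
  inv_val := by
    rw [Matrix.diagonal_mul_diagonal]
    ext a b
    simp [Matrix.diagonal_apply, Matrix.one_apply, inv_mul_cancel₀ (hd _)]

def twistedTransvUnit (i j : Fin n) (hij : i ≠ j) (c : F) : GL (Fin n) F where
  val := Matrix.transvection i j c
  inv := Matrix.transvection i j (-c)
  val_inv := by
    rw [Matrix.transvection_mul_transvection_same _ _ hij, add_neg_cancel,
      Matrix.transvection_zero]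
  inv_val := by
    rw [Matrix.transvection_mul_transvection_same _ _ hij, neg_add_cancel,
      Matrix.transvection_zero]

lemma twisted_diag_conj_transvection (d e : Fin n → F) (h : ∀ k, d k * e k = 1)
    (i j : Fin n) (c : F) :
    Matrix.diagonal d * Matrix.transvection i j c * Matrix.diagonal e =
      Matrix.transvection i j (d i * c * e j) := by
  have h1 : Matrix.diagonal d * Matrix.single i j c * Matrix.diagonal e =
      Matrix.single i j (d i * c * e j) := by
    ext a b
    rw [Matrix.mul_diagonal, Matrix.diagonal_mul]
    by_cases h1 : i = a <;> by_cases h2 : j = b <;>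
      simp [Matrix.single, h1, h2, mul_comm, mul_assoc]
  have h2 : Matrix.diagonal d * Matrix.diagonal e = (1 : Matrix (Fin n) (Fin n) F) := by
    rw [Matrix.diagonal_mul_diagonal]
    simp only [h, Matrix.diagonal_one]
  calc Matrix.diagonal d * Matrix.transvection i j c * Matrix.diagonal e
      = Matrix.diagonal d * Matrix.diagonal e +
        Matrix.diagonal d * Matrix.single i j c * Matrix.diagonal e := by
        rw [Matrix.transvection, mul_add, mul_one, add_mul]
    _ = 1 + Matrix.single i j (d i * c * e j) := by rw [h1, h2]
    _ = Matrix.transvection i j (d i * c * e j) := rfl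

end TwistedAux

theorem closure_twisted_class_eq_top (F : Type*) [Field F] [IsAlgClosed F] [CharZero F]
    (n : ℕ) (ψ : F ≃+* F)
    (φ : GL (Fin n) F →* GL (Fin n) F)
    (hφ : ∀ X : GL (Fin n) F,
      (φ X : Matrix (Fin n) (Fin n) F) = (X : Matrix (Fin n) (Fin n) F).map ψ)
    (hfin : Finite (Quot (fun x y : GL (Fin n) F => ∃ z, x = z * y * (φ z)⁻¹))) :
    Subgroup.closure {M : GL (Fin n) F | ∃ X, M = X * (φ X)⁻¹} = ⊤ := by
  classical
  rcases Nat.eq_zero_or_pos n with hn | hn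
  · subst hn
    rw [Subgroup.eq_top_iff']
    intro x
    have hx : x = 1 := Units.ext (by ext a b; exact a.elim0)
    rw [hx]; exact Subgroup.one_mem _
  set S := {M : GL (Fin n) F | ∃ X, M = X * (φ X)⁻¹} with hSdef
  set H := Subgroup.closure S with hHdef
  have hmemS : ∀ X : GL (Fin n) F, X * (φ X)⁻¹ ∈ H :=
    fun X => Subgroup.subset_closure ⟨X, rfl⟩
  -- normality of H
  have hnormal : H.Normal := by
    constructor
    intro x hx g
    rw [hHdef] at hx
    induction hx using Subgroup.closure_induction with
    | mem y hy =>
      rw [hSdef] at hy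
      obtain ⟨X, rfl⟩ := hy
      have key : g * (X * (φ X)⁻¹) * g⁻¹ =
          ((g * X) * (φ (g * X))⁻¹) * (g * (φ g)⁻¹)⁻¹ := by
        rw [_root_.map_mul]; group
      rw [key]
      exact mul_mem (hmemS _) (inv_mem (hmemS _))
    | one => simpa using one_mem H
    | mul a b _ _ ha hb =>
      have key : g * (a * b) * g⁻¹ = (g * a * g⁻¹) * (g * b * g⁻¹) := by group
      rw [key]; exact mul_mem ha hb
    | inv a _ ha =>
      have key : g * a⁻¹ * g⁻¹ = (g * a * g⁻¹)⁻¹ := by group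
      rw [key]; exact inv_mem ha
  -- the twisted conjugacy relation is an equivalence
  have hrequiv : Equivalence (fun x y : GL (Fin n) F => ∃ z, x = z * y * (φ z)⁻¹) := by
    constructor
    · intro x; exact ⟨1, by simp⟩
    · rintro x y ⟨z, rfl⟩
      exact ⟨z⁻¹, by rw [_root_.map_inv]; group⟩
    · rintro x y u ⟨z, rfl⟩ ⟨w, rfl⟩
      exact ⟨z * w, by rw [_root_.map_mul]; group⟩
  -- ψ is not the identity
  have hψ : ∃ t : F, ψ t ≠ t := by
    by_contra hcon
    push_neg at hcon
    have hφid : ∀ X : GL (Fin n) F, φ X = X := by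
      intro X
      apply Units.ext
      rw [hφ]
      ext a b
      simp [Matrix.map_apply, hcon]
    have i0 : Fin n := ⟨0, hn⟩
    have hcnz : ∀ k : ℕ, ((k : F) + 1 ≠ 0) := by
      intro k h0
      have h1 : ((k + 1 : ℕ) : F) = 0 := by push_cast; exact h0
      exact Nat.cast_ne_zero.mpr (Nat.succ_ne_zero k) h1
    set f : ℕ → Quot (fun x y : GL (Fin n) F => ∃ z, x = z * y * (φ z)⁻¹) :=
      fun k => Quot.mk _ (twistedDiagUnit (fun _ => (k : F) + 1) (fun _ => hcnz k)) with hf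
    have hinj : Function.Injective f := by
      intro k l hkl
      rw [hf] at hkl
      have h1 := Quot.eq.mp hkl
      rw [hrequiv.eqvGen_iff] at h1
      obtain ⟨z, hz⟩ := h1
      rw [hφid] at hz
      have hz2 : twistedDiagUnit (fun _ => (k : F) + 1) (fun _ => hcnz k) * z =
          z * twistedDiagUnit (fun _ => (l : F) + 1) (fun _ => hcnz l) := by
        rw [hz]; group
      have hz3 : Matrix.diagonal (fun _ => (k : F) + 1) * (z : Matrix (Fin n) (Fin n) F) =
          (z : Matrix (Fin n) (Fin n) F) * Matrix.diagonal (fun _ => (l : F) + 1) :=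
        congrArg Units.val hz2
      have hkl2 : ((k : F) + 1) = ((l : F) + 1) := by
        by_contra hne
        have hz0 : (z : Matrix (Fin n) (Fin n) F) = 0 := by
          ext a b
          have := congrFun (congrFun hz3 a) b
          rw [Matrix.diagonal_mul, Matrix.mul_diagonal] at this
          have h4 : (((k : F) + 1) - ((l : F) + 1)) * (z : Matrix (Fin n) (Fin n) F) a b = 0 := by
            rw [sub_mul, this]
            ring
          rcases mul_eq_zero.mp h4 with h5 | h5
          · exact absurd (sub_eq_zero.mp h5) hne
          · simpa using h5
        have hone := z.val_inv
        rw [hz0, zero_mul] at hone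
        have := congrFun (congrFun hone i0) i0
        simp at this
      have h5 : (k : F) = (l : F) := add_right_cancel hkl2
      exact_mod_cast h5
    haveI := hfin
    haveI := Finite.of_injective f hinj
    exact not_finite ℕ
  obtain ⟨t0, ht0⟩ := hψ
  have ha0 : t0 - ψ t0 ≠ 0 := sub_ne_zero.mpr (Ne.symm ht0)
  -- all transvections lie in H
  have htransH : ∀ (i j : Fin n) (hij : i ≠ j) (c : F), twistedTransvUnit i j hij c ∈ H := by
    intro i j hij c
    rcases eq_or_ne c 0 with rfl | hc
    · have h1 : twistedTransvUnit i j hij (0 : F) = 1 :=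
        Units.ext (by simp [twistedTransvUnit, Matrix.transvection_zero])
      rw [h1]; exact one_mem _
    · set X := twistedTransvUnit i j hij t0 with hX
      have hphiX : ((φ X : GL (Fin n) F) : Matrix (Fin n) (Fin n) F) =
          Matrix.transvection i j (ψ t0) := by
        rw [hφ]
        exact twisted_map_transvection ψ i j t0
      have hbase_eq : twistedTransvUnit i j hij (t0 - ψ t0) * φ X = X := by
        apply Units.ext
        rw [Units.val_mul, hphiX]
        show Matrix.transvection i j (t0 - ψ t0) * Matrix.transvection i j (ψ t0) =
          Matrix.transvection i j t0
        rw [Matrix.transvection_mul_transvection_same _ _ hij, sub_add_cancel]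
      have hbase : twistedTransvUnit i j hij (t0 - ψ t0) ∈ H := by
        have heq : twistedTransvUnit i j hij (t0 - ψ t0) = X * (φ X)⁻¹ :=
          eq_mul_inv_of_mul_eq hbase_eq
        rw [heq]; exact hmemS X
      set d : Fin n → F := fun k => if k = i then c * (t0 - ψ t0)⁻¹ else 1 with hd
      have hdnz : ∀ k, d k ≠ 0 := by
        intro k
        rw [hd]
        dsimp only
        split
        · exact mul_ne_zero hc (inv_ne_zero ha0)
        · exact one_ne_zero
      have hconj := hnormal.conj_mem _ hbase (twistedDiagUnit d hdnz)
      have heq2 : twistedDiagUnit d hdnz * twistedTransvUnit i j hij (t0 - ψ t0) *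
          (twistedDiagUnit d hdnz)⁻¹ = twistedTransvUnit i j hij c := by
        apply Units.ext
        rw [Units.val_mul, Units.val_mul]
        show Matrix.diagonal d * Matrix.transvection i j (t0 - ψ t0) *
            Matrix.diagonal (fun k => (d k)⁻¹) = Matrix.transvection i j c
        rw [twisted_diag_conj_transvection d _ (fun k => mul_inv_cancel₀ (hdnz k)) i j]
        rw [hd]
        dsimp only
        rw [if_pos rfl, if_neg (Ne.symm hij), inv_one, mul_one, mul_assoc,
          inv_mul_cancel₀ ha0, mul_one]
      rw [heq2] at hconj
      exact hconj
  haveI := hnormal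
  set π := QuotientGroup.mk' H with hπ
  have hker : ∀ u : GL (Fin n) F, u ∈ H → π u = 1 := fun u hu =>
    (QuotientGroup.eq_one_iff u).mpr hu
  have hsurj : ∀ a : GL (Fin n) F ⧸ H, ∃ x, π x = a := fun a =>
    QuotientGroup.mk'_surjective H a
  -- every class mod H contains a diagonal matrix
  have hdiag : ∀ g : GL (Fin n) F, ∃ (d : Fin n → F) (hd : ∀ k, d k ≠ 0),
      π g = π (twistedDiagUnit d hd) := by
    intro g
    obtain ⟨L, L', D, hg⟩ :=
      Matrix.Pivot.exists_list_transvec_mul_diagonal_mul_list_transvec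
        (g : Matrix (Fin n) (Fin n) F)
    have hlist : ∀ (L : List (Matrix.TransvectionStruct (Fin n) F)),
        ∃ u : GL (Fin n) F,
          (u : Matrix (Fin n) (Fin n) F) = (L.map Matrix.TransvectionStruct.toMatrix).prod ∧
          u ∈ H := by
      intro L
      induction L with
      | nil => exact ⟨1, by simp, one_mem _⟩
      | cons t L ih =>
        obtain ⟨u, hu, huH⟩ := ih
        refine ⟨twistedTransvUnit t.i t.j t.hij t.c * u, ?_, mul_mem (htransH _ _ _ _) huH⟩
        rw [Units.val_mul, hu]
        simp [Matrix.TransvectionStruct.toMatrix, twistedTransvUnit]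
    obtain ⟨u, huv, huH⟩ := hlist L
    obtain ⟨u', hu'v, hu'H⟩ := hlist L'
    have e1 : ((u⁻¹ : GL (Fin n) F) : Matrix (Fin n) (Fin n) F) *
        (u : Matrix (Fin n) (Fin n) F) = 1 := by
      rw [← Units.val_mul, inv_mul_cancel, Units.val_one]
    have e2 : ((u' : GL (Fin n) F) : Matrix (Fin n) (Fin n) F) *
        ((u'⁻¹ : GL (Fin n) F) : Matrix (Fin n) (Fin n) F) = 1 := by
      rw [← Units.val_mul, mul_inv_cancel, Units.val_one]
    have hw : ((u⁻¹ * g * u'⁻¹ : GL (Fin n) F) : Matrix (Fin n) (Fin n) F) =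
        Matrix.diagonal D := by
      rw [Units.val_mul, Units.val_mul, hg, ← huv, ← hu'v]
      calc ((u⁻¹ : GL (Fin n) F) : Matrix (Fin n) (Fin n) F) *
            ((u : Matrix (Fin n) (Fin n) F) * Matrix.diagonal D *
              (u' : Matrix (Fin n) (Fin n) F)) *
            ((u'⁻¹ : GL (Fin n) F) : Matrix (Fin n) (Fin n) F)
          = (((u⁻¹ : GL (Fin n) F) : Matrix (Fin n) (Fin n) F) *
              (u : Matrix (Fin n) (Fin n) F)) * Matrix.diagonal D *
            ((u' : Matrix (Fin n) (Fin n) F) *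
              ((u'⁻¹ : GL (Fin n) F) : Matrix (Fin n) (Fin n) F)) := by
            noncomm_ring
        _ = Matrix.diagonal D := by rw [e1, e2, Matrix.one_mul, Matrix.mul_one]
    have hDnz : ∀ k, D k ≠ 0 := by
      have hdet : (Matrix.diagonal D).det ≠ 0 := by
        rw [← hw]
        exact ((Matrix.isUnit_iff_isUnit_det _).mp (u⁻¹ * g * u'⁻¹).isUnit).ne_zero
      rw [Matrix.det_diagonal] at hdet
      intro k h0
      exact hdet (Finset.prod_eq_zero (Finset.mem_univ k) h0)
    refine ⟨D, hDnz, ?_⟩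
    have hud : (u⁻¹ * g * u'⁻¹ : GL (Fin n) F) = twistedDiagUnit D hDnz :=
      Units.ext (by rw [hw]; rfl)
    have hwu : g = u * (u⁻¹ * g * u'⁻¹) * u' := by group
    rw [hwu, _root_.map_mul, _root_.map_mul, hker u huH, hker u' hu'H, one_mul, mul_one, hud]
  -- the quotient is abelian
  have hcomm : ∀ a b : GL (Fin n) F ⧸ H, a * b = b * a := by
    intro a b
    obtain ⟨x, rfl⟩ := hsurj a
    obtain ⟨y, rfl⟩ := hsurj b
    obtain ⟨d, hd, hx⟩ := hdiag x
    obtain ⟨e, he, hy⟩ := hdiag y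
    rw [hx, hy, ← _root_.map_mul, ← _root_.map_mul]
    congr 1
    apply Units.ext
    rw [Units.val_mul, Units.val_mul]
    show Matrix.diagonal d * Matrix.diagonal e = Matrix.diagonal e * Matrix.diagonal d
    rw [Matrix.diagonal_mul_diagonal, Matrix.diagonal_mul_diagonal]
    exact congrArg Matrix.diagonal (funext fun k => mul_comm (d k) (e k))
  -- the quotient is finite
  have hlift : ∀ x y : GL (Fin n) F, (∃ z, x = z * y * (φ z)⁻¹) → π x = π y := by
    rintro x y ⟨z, rfl⟩
    rw [_root_.map_mul, _root_.map_mul, _root_.map_inv]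
    have h1 : π z * (π (φ z))⁻¹ = 1 := by
      rw [← _root_.map_inv, ← _root_.map_mul]
      exact hker _ (hmemS z)
    calc π z * π y * (π (φ z))⁻¹
        = π y * (π z * (π (φ z))⁻¹) := by rw [hcomm (π z) (π y)]; group
      _ = π y := by rw [h1, mul_one]
  haveI := hfin
  haveI hfinQ : Finite (GL (Fin n) F ⧸ H) := by
    have hsurj2 : Function.Surjective
        (Quot.lift (fun x => π x) hlift :
          Quot (fun x y : GL (Fin n) F => ∃ z, x = z * y * (φ z)⁻¹) → GL (Fin n) F ⧸ H) := by
      intro a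
      obtain ⟨x, hx⟩ := hsurj a
      exact ⟨Quot.mk _ x, hx⟩
    exact Finite.of_surjective _ hsurj2
  -- kill the quotient using divisibility of Fˣ
  rw [Subgroup.eq_top_iff']
  intro x
  have hx1 : π x = 1 := by
    obtain ⟨d, hd, hxd⟩ := hdiag x
    rw [hxd]
    have hm : 0 < Nat.card (GL (Fin n) F ⧸ H) := Nat.card_pos
    choose e he using fun k => IsAlgClosed.exists_pow_nat_eq (d k) hm
    have hene : ∀ k, e k ≠ 0 := by
      intro k h0
      exact hd k (by rw [← he k, h0, zero_pow hm.ne'])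
    have hpow : twistedDiagUnit d hd =
        (twistedDiagUnit e hene) ^ (Nat.card (GL (Fin n) F ⧸ H)) := by
      apply Units.ext
      rw [Units.val_pow_eq_pow_val]
      show Matrix.diagonal d = (Matrix.diagonal e) ^ (Nat.card (GL (Fin n) F ⧸ H))
      have hde : d = e ^ (Nat.card (GL (Fin n) F ⧸ H)) :=
        funext fun k => by rw [Pi.pow_apply]; exact (he k).symm
      rw [Matrix.diagonal_pow, hde]
    rw [hpow, _root_.map_pow]
    exact pow_card_eq_one'
  exact (QuotientGroup.eq_one_iff x).mp hx1
end
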